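/- Let I be a left rooted quiver and R_• a family of rings indexed by vertices with flat transition ring homomorphisms R_i → R_j along arrows (each R_j flat as left and right R_i-module). Let M be a representation assigning to each vertex i a left R_i-module M_i and to each arrow a : i → j an R_j-linear map R_j ⊗_{R_i} M_i → M_j. If at every vertex i the canonical map φ_i^M : ⨁_{a ∈ I(•,i)} R_i ⊗_{R_{s(a)}} M_{s(a)} → M_i is a monomorphism with flat cokernel, then the Pontryagin dual representation M^+ (with (M^+)_i = Hom_ℤ(M_i, ℚ/ℤ)) satisfies: at every vertex j the canonical map ψ_j^{M^+} : (M_j)^+ → ∏_{arrows a with source j in I^op} Hom_{R_{t(a)}}(R_j, (M_{t(a)})^+) is an epimorphism with injective kernel. -/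

import Mathlib

namespace Paper

open CategoryTheory TensorProduct MulOpposite

noncomputable def rootFiltration (V : Type) [Quiver V] (χ : Ordinal.{0}) : Set V :=
  Ordinal.limitRecOn χ
    (∅ : Set V)
    (fun _ W => W ∪ { i : V | ∀ ⦃j : V⦄, (j ⟶ i) → j ∈ W })
    (fun χ' _ ih => ⋃ (μ : Ordinal.{0}) (h : μ < χ'), ih μ h)

/-- A quiver is left rooted if the transfinite sequence `V_χ` exhausts all the vertices. -/
def IsLeftRooted (V : Type) [Quiver V] : Prop :=
  ∃ lam : Ordinal.{0}, rootFiltration V lam = Set.univ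

variable (R : Type) [Ring R]

def nctRel (E : Type) [AddCommGroup E] [Module Rᵐᵒᵖ E]
    (F : Type) [AddCommGroup F] [Module R F] : Submodule ℤ (TensorProduct ℤ E F) :=
  Submodule.span ℤ { x | ∃ (e : E) (r : R) (f : F),
    x = (op r • e) ⊗ₜ[ℤ] f - e ⊗ₜ[ℤ] (r • f) }

/-- The tensor product `E ⊗_R F` of a right `R`-module `E` and a left `R`-module `F`. -/
abbrev NCTensor (E : Type) [AddCommGroup E] [Module Rᵐᵒᵖ E]
    (F : Type) [AddCommGroup F] [Module R F] : Type :=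
  TensorProduct ℤ E F ⧸ nctRel R E F

noncomputable def nctMapLeft {F : Type} [AddCommGroup F] [Module R F]
    {E E' : Type} [AddCommGroup E] [Module Rᵐᵒᵖ E] [AddCommGroup E'] [Module Rᵐᵒᵖ E']
    (h : E →ₗ[Rᵐᵒᵖ] E') : NCTensor R E F →ₗ[ℤ] NCTensor R E' F :=
  Submodule.mapQ _ _ (LinearMap.rTensor F h.toAddMonoidHom.toIntLinearMap) (by
    rw [nctRel, Submodule.span_le]
    rintro x ⟨e, r, f, rfl⟩
    refine Submodule.mem_comap.2 ?_
    erw [map_sub, LinearMap.rTensor_tmul, LinearMap.rTensor_tmul]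
    refine Submodule.subset_span ⟨h e, r, f, ?_⟩
    simp [map_smul])

noncomputable def nctMapRight {E : Type} [AddCommGroup E] [Module Rᵐᵒᵖ E]
    {F F' : Type} [AddCommGroup F] [Module R F] [AddCommGroup F'] [Module R F']
    (g : F →ₗ[R] F') : NCTensor R E F →ₗ[ℤ] NCTensor R E F' :=
  Submodule.mapQ _ _ (LinearMap.lTensor E g.toAddMonoidHom.toIntLinearMap) (by
    rw [nctRel, Submodule.span_le]
    rintro x ⟨e, r, f, rfl⟩
    refine Submodule.mem_comap.2 ?_
    erw [map_sub, LinearMap.lTensor_tmul, LinearMap.lTensor_tmul]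
    refine Submodule.subset_span ⟨e, r, g f, ?_⟩
    simp [map_smul])

/-- A left `R`-module `F` is flat if the functor `- ⊗_R F` is exact. -/
def LeftFlat (F : Type) [AddCommGroup F] [Module R F] : Prop :=
  ∀ (E₁ E₂ E₃ : Type) [AddCommGroup E₁] [Module Rᵐᵒᵖ E₁] [AddCommGroup E₂] [Module Rᵐᵒᵖ E₂]
    [AddCommGroup E₃] [Module Rᵐᵒᵖ E₃] (f : E₁ →ₗ[Rᵐᵒᵖ] E₂) (g : E₂ →ₗ[Rᵐᵒᵖ] E₃),
    Function.Injective f → Function.Surjective g → Function.Exact f g →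
    Function.Injective (nctMapLeft R (F := F) f) ∧
      Function.Surjective (nctMapLeft R (F := F) g) ∧
      Function.Exact (nctMapLeft R (F := F) f) (nctMapLeft R (F := F) g)

/-- A right `R`-module `E` is flat if the functor `E ⊗_R -` is exact. -/
def RightFlat (E : Type) [AddCommGroup E] [Module Rᵐᵒᵖ E] : Prop :=
  ∀ (F₁ F₂ F₃ : Type) [AddCommGroup F₁] [Module R F₁] [AddCommGroup F₂] [Module R F₂]
    [AddCommGroup F₃] [Module R F₃] (f : F₁ →ₗ[R] F₂) (g : F₂ →ₗ[R] F₃),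
    Function.Injective f → Function.Surjective g → Function.Exact f g →
    Function.Injective (nctMapRight R (E := E) f) ∧
      Function.Surjective (nctMapRight R (E := E) g) ∧
      Function.Exact (nctMapRight R (E := E) f) (nctMapRight R (E := E) g)

/-- The character module `M⁺ = Hom_ℤ(M, ℚ/ℤ)` of a left `R`-module is a right
`R`-module. -/
noncomputable instance charRightOp (R M : Type) [Ring R] [AddCommGroup M] [Module R M] :
    Module Rᵐᵒᵖ (CharacterModule M) :=
  inferInstanceAs (Module Rᵈᵐᵃ (M →+ AddCircle (1 : ℚ)))

/-- The relations defining the extension of scalars `S ⊗_R G` along `φ : R →+* S`. -/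
def extRel {R S : Type} [Ring R] [Ring S] (φ : R →+* S) (G : Type) [AddCommGroup G]
    [Module R G] : Submodule S (TensorProduct ℤ S G) :=
  Submodule.span S { x | ∃ (s : S) (r : R) (g : G),
    x = (s * φ r) ⊗ₜ[ℤ] g - s ⊗ₜ[ℤ] (r • g) }

/-- The extension of scalars `S ⊗_R G` of a left `R`-module `G` along `φ : R →+* S`. -/
abbrev ExtMod {R S : Type} [Ring R] [Ring S] (φ : R →+* S) (G : Type) [AddCommGroup G]
    [Module R G] : Type :=
  TensorProduct ℤ S G ⧸ extRel φ G

variable {R} {S : Type} [Ring S] (φ : R →+* S)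
  {G : Type} [AddCommGroup G] [Module R G] {N : Type} [AddCommGroup N] [Module S N]

/-- The component of the canonical map `N⁺ → Hom_R(S, G⁺)` dual to a structure map
`σ : S ⊗_R G → N`, an element of the coinduced right `S`-module `Hom_R(S, G⁺)`. -/
noncomputable def coindElt (σ : ExtMod φ G →ₗ[S] N) (χ : CharacterModule N) :
    ((ModuleCat.coextendScalars (RingHom.op φ)).obj
      (ModuleCat.of Rᵐᵒᵖ (CharacterModule G))) where
  toFun x :=
    AddMonoidHom.comp (show N →+ AddCircle (1 : ℚ) from χ)
      (AddMonoidHom.comp σ.toAddMonoidHom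
        (AddMonoidHom.comp ((extRel φ G).mkQ.toAddMonoidHom)
          ((TensorProduct.mk ℤ S G (unop (show Sᵐᵒᵖ from x))).toAddMonoidHom)))
  map_add' x y := by
    refine CharacterModule.ext _ fun m => ?_
    show χ (σ (Submodule.Quotient.mk ((unop (show Sᵐᵒᵖ from x) + unop (show Sᵐᵒᵖ from y)) ⊗ₜ[ℤ] m)))
      = χ (σ (Submodule.Quotient.mk ((unop (show Sᵐᵒᵖ from x)) ⊗ₜ[ℤ] m)))
      + χ (σ (Submodule.Quotient.mk ((unop (show Sᵐᵒᵖ from y)) ⊗ₜ[ℤ] m)))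
    rw [TensorProduct.add_tmul]
    rw [show Submodule.Quotient.mk (((unop (show Sᵐᵒᵖ from x)) ⊗ₜ[ℤ] m) + ((unop (show Sᵐᵒᵖ from y)) ⊗ₜ[ℤ] m))
        = Submodule.Quotient.mk (p := extRel φ G) ((unop (show Sᵐᵒᵖ from x)) ⊗ₜ[ℤ] m)
        + Submodule.Quotient.mk ((unop (show Sᵐᵒᵖ from y)) ⊗ₜ[ℤ] m) from rfl]
    rw [map_add, map_add]
  map_smul' r x := by
    refine CharacterModule.ext _ fun m => ?_
    show χ (σ (Submodule.Quotient.mk ((unop (RingHom.op φ r • (show Sᵐᵒᵖ from x))) ⊗ₜ[ℤ] m)))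
      = χ (σ (Submodule.Quotient.mk ((unop (show Sᵐᵒᵖ from x)) ⊗ₜ[ℤ] (unop r • m))))
    congr 1
    congr 1
    rw [Submodule.Quotient.eq]
    exact Submodule.subset_span ⟨unop (show Sᵐᵒᵖ from x), unop r, m, rfl⟩

end Paper

namespace Paper

open CategoryTheory TensorProduct MulOpposite DirectSum

variable {V : Type} [Quiver.{1} V] (R : V → Type) [∀ i, Ring (R i)]
  (ρ : ∀ ⦃i j : V⦄, (i ⟶ j) → (R i →+* R j))
  (M : ∀ i : V, ModuleCat.{0} (R i))
  (σ : ∀ ⦃i j : V⦄ (a : i ⟶ j), ExtMod (ρ a) (M i) →ₗ[R j] M j)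

/-- The canonical map `φⱼᴹ : ⨁_{a ∈ I(•,j)} R_j ⊗_{R_{s(a)}} M_{s(a)} → M_j`. -/
noncomputable def phiMod (j : V) :
    (⨁ p : Σ i : V, i ⟶ j, ExtMod (ρ p.2) (M p.1)) →ₗ[R j] M j :=
  letI := Classical.decEq (Σ i : V, i ⟶ j)
  DirectSum.toModule (R j) _ _ fun p => σ p.2

/-- The canonical map `ψⱼ : (M_j)⁺ → ∏_{a} Hom_{R_{s(a)}}(R_j, (M_{s(a)})⁺)` of the
Pontryagin dual representation. -/
noncomputable def psiFun (j : V) :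
    CharacterModule (M j) →
      ∀ p : Σ i : V, i ⟶ j,
        ((ModuleCat.coextendScalars (RingHom.op (ρ p.2))).obj
          (ModuleCat.of (R p.1)ᵐᵒᵖ (CharacterModule (M p.1)))) :=
  fun χ p => coindElt (ρ p.2) (σ p.2) χ

end Paper

/-!
Under the isomorphisms `(⨁ₐ Xₐ)⁺ ≅ ∏ₐ Xₐ⁺` and `(R_j ⊗_{R_i} M_i)⁺ ≅ Hom_{R_i}(R_j, M_i⁺)`,
`ψ_j` becomes the dual `(φ_j)⁺` of the canonical map `φ_j`. Since `ℚ/ℤ` is an injective abelian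
group, the dual of the monomorphism `φ_j` is surjective. Its kernel consists of the characters
vanishing on the image of `φ_j`, so it is `(coker φ_j)⁺`, and the character module of a flat
module is injective (Lambek).
-/

namespace Paper

open MulOpposite TensorProduct

section Characters

variable {R : Type} [Ring R] {M N : Type} [AddCommGroup M] [Module R M]
  [AddCommGroup N] [Module R N]

def charComap (f : M →ₗ[R] N) : CharacterModule N →ₗ[Rᵐᵒᵖ] CharacterModule M where
  toFun χ := AddMonoidHom.comp χ f.toAddMonoidHom
  map_add' _ _ := rfl
  map_smul' c χ := CharacterModule.ext _ fun m => by
    show χ (unop c • f m) = χ (f (unop c • m))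
    rw [f.map_smul]

lemma charComap_injective {f : M →ₗ[R] N} (hf : Function.Surjective f) :
    Function.Injective (charComap f) := fun χ χ' h => CharacterModule.ext _ fun n => by
  obtain ⟨m, rfl⟩ := hf n
  exact DFunLike.congr_fun h m

lemma mem_range_charComap_mkQ_iff (p : Submodule R M) (χ : CharacterModule M) :
    χ ∈ LinearMap.range (charComap p.mkQ) ↔ ∀ m ∈ p, χ m = 0 := by
  constructor
  · rintro ⟨ξ, rfl⟩ m hm
    show ξ (Submodule.Quotient.mk m) = 0
    rw [(Submodule.Quotient.mk_eq_zero p).2 hm, map_zero]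
  · intro h
    exact ⟨QuotientAddGroup.lift p.toAddSubgroup χ h, rfl⟩

lemma exists_character_comp_eq {A B : Type*} [AddCommGroup A] [AddCommGroup B] {f : A →+ B}
    (hf : Function.Injective f) (ξ : CharacterModule A) :
    ∃ χ : CharacterModule B, ∀ a, χ (f a) = ξ a := by
  obtain ⟨χ, hχ⟩ := CharacterModule.dual_surjective_of_injective f.toIntLinearMap hf ξ
  exact ⟨χ, fun a => DFunLike.congr_fun hχ a⟩

end Characters

lemma map_eq_zero_of_mem_span {S T C : Type*} [Ring S] [AddCommGroup T] [Module S T]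
    [AddCommGroup C] (L : T →+ C) {s : Set T} (hs : ∀ a : S, ∀ x ∈ s, L (a • x) = 0)
    {x : T} (hx : x ∈ Submodule.span S s) : L x = 0 := by
  suffices ∀ a : S, L (a • x) = 0 by simpa using this 1
  induction hx using Submodule.span_induction with
  | mem x hxs => exact fun a => hs a x hxs
  | zero => simp
  | add x y _ _ hx hy => intro a; rw [smul_add, map_add, hx, hy, add_zero]
  | smul c x _ hx => intro a; rw [smul_smul]; exact hx (a * c)

lemma zsmul_apply_eq_apply_zsmul {A B C : Type*} [AddCommGroup A] [AddCommGroup B]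
    [AddCommGroup C] (b : A →+ B →+ C) (z : ℤ) (a : A) (x : B) : b (z • a) x = b a (z • x) := by
  rw [map_zsmul, AddMonoidHom.zsmul_apply, map_zsmul]

section NCTensor

variable {R : Type} [Ring R] {E F : Type} [AddCommGroup E] [Module Rᵐᵒᵖ E]
  [AddCommGroup F] [Module R F]

noncomputable def nctCharOfHom (g : E →ₗ[Rᵐᵒᵖ] CharacterModule F) :
    CharacterModule (NCTensor R E F) :=
  QuotientAddGroup.lift (nctRel R E F).toAddSubgroup
    (TensorProduct.liftAddHom
      (g.toAddMonoidHom : E →+ F →+ AddCircle (1 : ℚ)) (zsmul_apply_eq_apply_zsmul _))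
    fun x hx => map_eq_zero_of_mem_span (S := ℤ) _ (by
      rintro a x ⟨e, r, f, rfl⟩
      rw [map_zsmul, map_sub]
      change a • (g (op r • e) f - g e (r • f)) = 0
      rw [g.map_smul]
      change a • (g e (r • f) - g e (r • f)) = 0
      rw [sub_self, smul_zero]) hx

@[simp] lemma nctCharOfHom_mk (g : E →ₗ[Rᵐᵒᵖ] CharacterModule F) (e : E) (f : F) :
    nctCharOfHom g (Submodule.Quotient.mk (e ⊗ₜ[ℤ] f) : NCTensor R E F) = g e f :=
  rfl

lemma LeftFlat.nctMapLeft_injective (hF : LeftFlat R F) {E' : Type} [AddCommGroup E']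
    [Module Rᵐᵒᵖ E'] {f : E →ₗ[Rᵐᵒᵖ] E'} (hf : Function.Injective f) :
    Function.Injective (nctMapLeft R (F := F) f) :=
  (hF E E' (E' ⧸ LinearMap.range f) f (LinearMap.range f).mkQ hf
    (Submodule.mkQ_surjective _) (LinearMap.exact_iff.2 (Submodule.ker_mkQ _))).1

lemma nctMapLeft_mk {E' : Type} [AddCommGroup E'] [Module Rᵐᵒᵖ E'] (f : E →ₗ[Rᵐᵒᵖ] E')
    (e : E) (x : F) :
    nctMapLeft R f (Submodule.Quotient.mk (e ⊗ₜ[ℤ] x) : NCTensor R E F) =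
      Submodule.Quotient.mk (f e ⊗ₜ[ℤ] x) :=
  rfl

/-- Lambek's criterion. A map `g : I → F⁺` on a right ideal is a character of `I ⊗_R F`;
flatness extends it to `Rᵒᵖ ⊗_R F = F`, and the extension is `x ↦ x • κ` for the resulting
`κ ∈ F⁺`. -/
theorem LeftFlat.baer_characterModule (hF : LeftFlat R F) :
    Module.Baer Rᵐᵒᵖ (CharacterModule F) := by
  intro I g
  obtain ⟨Ξ, hΞ⟩ := exists_character_comp_eq
    (f := (nctMapLeft R (F := F) I.subtype).toAddMonoidHom)
    (hF.nctMapLeft_injective Subtype.val_injective) (nctCharOfHom g)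
  let κ : CharacterModule F := AddMonoidHom.comp Ξ
    ((nctRel R Rᵐᵒᵖ F).mkQ.toAddMonoidHom.comp (TensorProduct.mk ℤ Rᵐᵒᵖ F 1).toAddMonoidHom)
  refine ⟨LinearMap.toSpanSingleton _ _ κ, fun x hx => CharacterModule.ext _ fun m => ?_⟩
  have hrel : (Submodule.Quotient.mk ((1 : Rᵐᵒᵖ) ⊗ₜ[ℤ] (unop x • m)) : NCTensor R Rᵐᵒᵖ F) =
      Submodule.Quotient.mk (x ⊗ₜ[ℤ] m) := by
    rw [eq_comm, Submodule.Quotient.eq]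
    exact Submodule.subset_span ⟨1, unop x, m, by rw [smul_eq_mul, mul_one, op_unop]⟩
  calc (x • κ) m = Ξ (Submodule.Quotient.mk ((1 : Rᵐᵒᵖ) ⊗ₜ[ℤ] (unop x • m))) := rfl
    _ = Ξ (nctMapLeft R I.subtype (Submodule.Quotient.mk ((⟨x, hx⟩ : I) ⊗ₜ[ℤ] m))) := by
      rw [hrel, nctMapLeft_mk]; rfl
    _ = g ⟨x, hx⟩ m := (hΞ _).trans (nctCharOfHom_mk g _ _)

end NCTensor

lemma LeftFlat.injective_range_charComap {R : Type} [Ring R] {M N : Type} [AddCommGroup M]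
    [Module R M] [AddCommGroup N] [Module R N] (hN : LeftFlat R N) {f : M →ₗ[R] N}
    (hf : Function.Surjective f) : Module.Injective Rᵐᵒᵖ (LinearMap.range (charComap f)) :=
  (hN.baer_characterModule.of_equiv (LinearEquiv.ofInjective _ (charComap_injective hf))).injective

section ExtensionOfScalars

variable {R S : Type} [Ring R] [Ring S] (φ : R →+* S) (G : Type) [AddCommGroup G] [Module R G]

noncomputable def extModCharOfCoind
    (f : (ModuleCat.coextendScalars (RingHom.op φ)).obj (ModuleCat.of Rᵐᵒᵖ (CharacterModule G))) :
    CharacterModule (ExtMod φ G) :=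
  let L := ModuleCat.CoextendScalars.equiv (RingHom.op φ) _ f
  QuotientAddGroup.lift (extRel φ G).toAddSubgroup
    (TensorProduct.liftAddHom
      ((L.toAddMonoidHom.comp (opAddEquiv : S ≃+ Sᵐᵒᵖ).toAddMonoidHom :
        S →+ G →+ AddCircle (1 : ℚ)))
      (zsmul_apply_eq_apply_zsmul _))
    fun x hx => map_eq_zero_of_mem_span (S := S) _ (by
      rintro a x ⟨s, r, g, rfl⟩
      rw [smul_sub, smul_tmul', smul_tmul', map_sub]
      have := DFunLike.congr_fun (L.map_smul (op r) (op (a * s))) g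
      change L (op (a * (s * φ r))) g - L (op (a * s)) (r • g) = 0
      rw [← mul_assoc]
      exact sub_eq_zero.2 this) hx

/-- The adjunction isomorphism `(S ⊗_R G)⁺ ≅ Hom_R(S, G⁺)`. -/
noncomputable def extModCharEquiv :
    CharacterModule (ExtMod φ G) ≃+
      (ModuleCat.coextendScalars (RingHom.op φ)).obj (ModuleCat.of Rᵐᵒᵖ (CharacterModule G)) where
  toFun := coindElt φ LinearMap.id
  invFun := extModCharOfCoind φ G
  left_inv χ := CharacterModule.ext _ fun y => by
    obtain ⟨t, rfl⟩ := Submodule.Quotient.mk_surjective _ y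
    induction t using TensorProduct.induction_on with
    | zero => rw [Submodule.Quotient.mk_zero, map_zero, map_zero]
    | tmul s g => rfl
    | add t t' ht ht' =>
      rw [Submodule.Quotient.mk_add, map_add, map_add, ht, ht']
  right_inv _ := rfl
  map_add' _ _ := rfl

lemma coindElt_eq_extModCharEquiv {N : Type} [AddCommGroup N] [Module S N]
    (σ : ExtMod φ G →ₗ[S] N) (χ : CharacterModule N) :
    coindElt φ σ χ = extModCharEquiv φ G (AddMonoidHom.comp χ σ.toAddMonoidHom) :=
  rfl

end ExtensionOfScalars

section Representation

open DirectSum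

variable {V : Type} [Quiver.{1} V] (R : V → Type) [∀ i, Ring (R i)]
  (ρ : ∀ ⦃i j : V⦄, (i ⟶ j) → (R i →+* R j))
  (M : ∀ i : V, ModuleCat.{0} (R i))
  (σ : ∀ ⦃i j : V⦄ (a : i ⟶ j), ExtMod (ρ a) (M i) →ₗ[R j] M j)

lemma phiMod_of (j : V) [DecidableEq (Σ i : V, i ⟶ j)] (p : Σ i : V, i ⟶ j)
    (y : ExtMod (ρ p.2) (M p.1)) :
    phiMod R ρ M σ j (DirectSum.of (fun p : Σ i : V, i ⟶ j => ExtMod (ρ p.2) (M p.1)) p y) =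
      σ p.2 y := by
  rw [← DirectSum.lof_eq_of (R j), phiMod]
  convert DirectSum.toModule_lof (R j) (M := fun p : Σ i : V, i ⟶ j => ExtMod (ρ p.2) (M p.1))
    (φ := fun p => σ p.2) p y

lemma psiFun_apply (j : V) (χ : CharacterModule (M j)) (p : Σ i : V, i ⟶ j) :
    psiFun R ρ M σ j χ p =
      extModCharEquiv (ρ p.2) (M p.1) (AddMonoidHom.comp χ (σ p.2).toAddMonoidHom) :=
  coindElt_eq_extModCharEquiv (ρ p.2) (M p.1) (σ p.2) χ

theorem psiFun_surjective {j : V} (hφ : Function.Injective (phiMod R ρ M σ j)) :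
    Function.Surjective (psiFun R ρ M σ j) := by
  classical
  intro f
  -- instance search does not find this family of instances on its own
  let (p : Σ i : V, i ⟶ j) : AddCommGroup (ExtMod (ρ p.2) (M p.1)) := inferInstance
  let ξ : CharacterModule (⨁ p : Σ i : V, i ⟶ j, ExtMod (ρ p.2) (M p.1)) :=
    DirectSum.toAddMonoid fun p => ((extModCharEquiv (ρ p.2) (M p.1)).symm (f p) :
      ExtMod (ρ p.2) (M p.1) →+ AddCircle (1 : ℚ))
  obtain ⟨χ, hχ⟩ := exists_character_comp_eq (f := (phiMod R ρ M σ j).toAddMonoidHom) hφ ξ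
  refine ⟨χ, funext fun p => ?_⟩
  have hcomp : AddMonoidHom.comp χ (σ p.2).toAddMonoidHom =
      (extModCharEquiv (ρ p.2) (M p.1)).symm (f p) := CharacterModule.ext _ fun y => by
    change χ (σ p.2 y) = _
    rw [← phiMod_of]
    exact (hχ _).trans (toAddMonoid_of _ _ _)
  rw [psiFun_apply, hcomp, AddEquiv.apply_symm_apply]

lemma psiFun_eq_zero_iff (j : V) (χ : CharacterModule (M j)) :
    psiFun R ρ M σ j χ = 0 ↔ ∀ m ∈ LinearMap.range (phiMod R ρ M σ j), χ m = 0 := by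
  classical
  have hcomp : psiFun R ρ M σ j χ = 0 ↔
      ∀ p : Σ i : V, i ⟶ j, AddMonoidHom.comp χ (σ p.2).toAddMonoidHom = 0 := by
    simp only [funext_iff, Pi.zero_apply, psiFun_apply]
    exact forall_congr' fun p => (extModCharEquiv (ρ p.2) (M p.1)).map_eq_zero_iff
  rw [hcomp]
  constructor
  · rintro h _ ⟨x, rfl⟩
    induction x using DirectSum.induction_on with
    | zero => rw [map_zero, map_zero]
    | of p y => rw [phiMod_of]; exact DFunLike.congr_fun (h p) y
    | add x x' hx hx' => rw [map_add, map_add, hx, hx', add_zero]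
  · intro h p
    refine CharacterModule.ext _ fun y => ?_
    change χ (σ p.2 y) = 0
    rw [← phiMod_of]
    exact h _ ⟨_, rfl⟩

end Representation

end Paper

open Paper CategoryTheory MulOpposite in
theorem stmt15_general {V : Type} [Quiver.{1} V]
    (R : V → Type) [∀ i, Ring (R i)] (ρ : ∀ ⦃i j : V⦄, (i ⟶ j) → (R i →+* R j))
    (M : ∀ i : V, ModuleCat.{0} (R i))
    (σ : ∀ ⦃i j : V⦄ (a : i ⟶ j), ExtMod (ρ a) (M i) →ₗ[R j] M j)
    (hphi : ∀ i : V, Function.Injective (phiMod R ρ M σ i) ∧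
      LeftFlat (R i) ((M i) ⧸ LinearMap.range (phiMod R ρ M σ i))) :
    ∀ j : V, Function.Surjective (psiFun R ρ M σ j) ∧
      ∃ K : Submodule (R j)ᵐᵒᵖ (CharacterModule (M j)),
        (∀ χ : CharacterModule (M j), χ ∈ K ↔ psiFun R ρ M σ j χ = 0) ∧
        Module.Injective (R j)ᵐᵒᵖ K := by
  intro j
  obtain ⟨hinj, hcoker⟩ := hphi j
  set P := LinearMap.range (phiMod R ρ M σ j)
  refine ⟨psiFun_surjective R ρ M σ hinj, LinearMap.range (charComap P.mkQ), fun χ => ?_,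
    hcoker.injective_range_charComap P.mkQ_surjective⟩
  rw [mem_range_charComap_mkQ_iff, psiFun_eq_zero_iff]

open Paper CategoryTheory MulOpposite in
/-- If all the canonical maps `φᵢᴹ` of a representation `M` over a flat representation of
rings on a left rooted quiver are monomorphisms with flat cokernels, then all the
canonical maps `ψⱼ` of the Pontryagin dual representation `M⁺` are epimorphisms with
injective kernels. -/
theorem stmt15 {V : Type} [Quiver.{1} V] (hV : IsLeftRooted V)
    (R : V → Type) [∀ i, Ring (R i)] (ρ : ∀ ⦃i j : V⦄, (i ⟶ j) → (R i →+* R j))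
    (hflat : ∀ ⦃i j : V⦄ (a : i ⟶ j),
      (@LeftFlat (R i) _ (R j) _ (Module.compHom (R j) (ρ a))) ∧
      (@RightFlat (R i) _ (R j) _ (Module.compHom (R j) (RingHom.op (ρ a)))))
    (M : ∀ i : V, ModuleCat.{0} (R i))
    (σ : ∀ ⦃i j : V⦄ (a : i ⟶ j), ExtMod (ρ a) (M i) →ₗ[R j] M j)
    (hphi : ∀ i : V, Function.Injective (phiMod R ρ M σ i) ∧
      LeftFlat (R i) ((M i) ⧸ LinearMap.range (phiMod R ρ M σ i))) :
    ∀ j : V, Function.Surjective (psiFun R ρ M σ j) ∧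
      ∃ K : Submodule (R j)ᵐᵒᵖ (CharacterModule (M j)),
        (∀ χ : CharacterModule (M j), χ ∈ K ↔ psiFun R ρ M σ j χ = 0) ∧
        Module.Injective (R j)ᵐᵒᵖ K :=
  stmt15_general R ρ M σ hphi
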